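/- arXiv:2509.05159 — 2 statements merged into one kernel-verified Lean document; each statement's English description precedes it below -/
import Mathlib

section
/- Let κ ≥ 4 and let h : [0, π] → ℝ be continuously differentiable on [0, π] and twice differentiable on (0, π), solving the profile equation h''(θ) + (cos θ / sin θ)·h'(θ) − sin(2h(θ))/(2 sin²θ) − (κ/2)·sin(2h(θ) − 2θ) = 0 on (0, π). Assume h(0) = h(π) = π, h(θ) + h(π − θ) = 2π for all θ ∈ [0, π], and π ≤ h(θ) ≤ π + θ for all θ ∈ [0, π/2]. Then (i) the function θ ↦ π + θ − h(θ) is monotonically increasing on [0, π], and (ii) the function θ ↦ sin²(h(θ) − θ)·sin θ is monotonically increasing on [0, π/2] and monotonically decreasing on [π/2, π]. -/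
open Real Set Filter Topology

/-!
Put `G θ = sin θ · (1 - h'(θ))`. The profile equation turns `G'` into a trigonometric expression
in `θ` and `h θ` that is nonnegative on `(0, π/2)` as long as `h` stays in the wedge; since
`G 0 = 0`, this gives `h' ≤ 1` on `(0, π/2]`, and the symmetry `h θ + h (π - θ) = 2π` makes `h'`
even about `π/2`, so `h' ≤ 1` on all of `(0, π)`. This is (i). For (ii), on `[0, π/2]` the angle
`h θ - θ` lies in `[π/2, π]` and decreases, so both factors of `sin²(h θ - θ) · sin θ` increase;
the symmetry reflects this to `[π/2, π]`.
-/

def ProfileEq (κ : ℝ) (h : ℝ → ℝ) (θ : ℝ) : Prop :=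
  deriv (deriv h) θ + (cos θ / sin θ) * deriv h θ - sin (2 * h θ) / (2 * sin θ ^ 2)
    - (κ / 2) * sin (2 * h θ - 2 * θ) = 0

lemma sin_two_mul_sub_sin_two_mul_sub_mul_sin_nonneg {κ θ φ : ℝ} (hκ : 1 ≤ κ)
    (hθ : θ ∈ Icc 0 (π / 2)) (hφ : φ ∈ Icc (θ + π / 2) (θ + π)) :
    0 ≤ sin (2 * θ) - sin (2 * φ) - κ * sin θ ^ 2 * sin (2 * φ - 2 * θ) := by
  obtain ⟨x, hx, rfl⟩ : ∃ x ∈ Icc 0 (π / 2), φ = θ + π - x :=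
    ⟨θ + π - φ, ⟨by linarith [hφ.2], by linarith [hφ.1]⟩, by ring⟩
  have hsθ : 0 ≤ sin θ := sin_nonneg_of_nonneg_of_le_pi hθ.1 (by linarith [hθ.2, pi_pos])
  have hcθ : 0 ≤ cos θ := cos_nonneg_of_mem_Icc ⟨by linarith [hθ.1, pi_pos], hθ.2⟩
  have hsx : 0 ≤ sin x := sin_nonneg_of_nonneg_of_le_pi hx.1 (by linarith [hx.2, pi_pos])
  have hcx : 0 ≤ cos x := cos_nonneg_of_mem_Icc ⟨by linarith [hx.1, pi_pos], hx.2⟩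
  have hκ' : 0 ≤ κ - 1 := by linarith
  have hsin₁ : sin (2 * (θ + π - x)) = sin (2 * θ - 2 * x) := by
    rw [show 2 * (θ + π - x) = 2 * θ - 2 * x + 2 * π by ring, sin_add_two_pi]
  have hsin₂ : sin (2 * (θ + π - x) - 2 * θ) = -sin (2 * x) := by
    rw [show 2 * (θ + π - x) - 2 * θ = 2 * π - 2 * x by ring, sin_two_pi_sub]
  have hexpand : sin (2 * θ) - sin (2 * θ - 2 * x) + κ * sin θ ^ 2 * sin (2 * x)
      = 2 * sin x * (2 * sin θ * cos θ * sin x + cos x * (cos θ ^ 2 + (κ - 1) * sin θ ^ 2)) := by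
    rw [sin_sub, sin_two_mul θ, sin_two_mul x, cos_two_mul θ, cos_two_mul x]
    linear_combination (-4 * sin θ * cos θ) * sin_sq_add_cos_sq x
      + (2 * sin x * cos x) * sin_sq_add_cos_sq θ
  rw [hsin₁, hsin₂, mul_neg, sub_neg_eq_add, hexpand]
  positivity

lemma hasDerivAt_sin_mul_one_sub_deriv {κ θ : ℝ} {h : ℝ → ℝ} (hθ : sin θ ≠ 0)
    (hd : DifferentiableAt ℝ (deriv h) θ) (heq : ProfileEq κ h θ) :
    HasDerivAt (fun t => sin t * (1 - deriv h t))
      ((sin (2 * θ) - sin (2 * h θ) - κ * sin θ ^ 2 * sin (2 * h θ - 2 * θ)) / (2 * sin θ)) θ := by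
  refine ((hasDerivAt_sin θ).mul (hd.hasDerivAt.const_sub 1)).congr_deriv ?_
  have hdd : deriv (deriv h) θ = sin (2 * h θ) / (2 * sin θ ^ 2)
      + (κ / 2) * sin (2 * h θ - 2 * θ) - (cos θ / sin θ) * deriv h θ := by
    unfold ProfileEq at heq
    linarith
  rw [hdd, sin_two_mul θ]
  field_simp
  ring

lemma deriv_le_one_of_wedge {κ : ℝ} {h : ℝ → ℝ} (hκ : 1 ≤ κ)
    (hC1 : ContDiffOn ℝ 1 h (Icc 0 π))
    (hC2 : ∀ θ ∈ Ioo 0 π, DifferentiableAt ℝ (deriv h) θ)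
    (heq : ∀ θ ∈ Ioo 0 π, ProfileEq κ h θ)
    (hwedge : ∀ θ ∈ Icc 0 (π / 2), π ≤ h θ ∧ h θ ≤ π + θ) :
    ∀ θ ∈ Ioc 0 (π / 2), deriv h θ ≤ 1 := by
  intro θ hθ
  have hπ := pi_pos
  have hIoo : ∀ t ∈ Ioo 0 (π / 2), t ∈ Ioo 0 π := fun t ht => ⟨ht.1, by linarith [ht.2]⟩
  -- `derivWithin` makes `G` continuous at the endpoint `0`, where `h` need not be differentiable.
  set G : ℝ → ℝ := fun t => sin t * (1 - derivWithin h (Icc 0 π) t)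
  have hG_eq : ∀ t ∈ Ioo 0 π, G =ᶠ[𝓝 t] fun t => sin t * (1 - deriv h t) := fun t ht => by
    filter_upwards [isOpen_Ioo.mem_nhds ht] with s hs
    simp only [G, derivWithin_of_mem_nhds (Icc_mem_nhds hs.1 hs.2)]
  have hG_cont : ContinuousOn G (Icc 0 (π / 2)) :=
    (continuous_sin.continuousOn.mul (continuousOn_const.sub
      (hC1.continuousOn_derivWithin (uniqueDiffOn_Icc hπ) le_rfl))).mono
      (Icc_subset_Icc_right (by linarith))
  have hG_mono : MonotoneOn G (Icc 0 (π / 2)) := by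
    refine monotoneOn_of_hasDerivWithinAt_nonneg (convex_Icc _ _) hG_cont
      (f' := fun t => (sin (2 * t) - sin (2 * h t) - κ * sin t ^ 2 * sin (2 * h t - 2 * t))
        / (2 * sin t))
      (fun t ht => ?_) (fun t ht => ?_)
    all_goals rw [interior_Icc] at ht
    · exact ((hasDerivAt_sin_mul_one_sub_deriv (sin_pos_of_pos_of_lt_pi ht.1 (hIoo t ht).2).ne'
        (hC2 t (hIoo t ht)) (heq t (hIoo t ht))).congr_of_eventuallyEq
        (hG_eq t (hIoo t ht))).hasDerivWithinAt
    · have hw := hwedge t (Ioo_subset_Icc_self ht)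
      exact div_nonneg (sin_two_mul_sub_sin_two_mul_sub_mul_sin_nonneg hκ
        (Ioo_subset_Icc_self ht) ⟨by linarith [ht.2], by linarith⟩)
        (by linarith [sin_pos_of_pos_of_lt_pi ht.1 (hIoo t ht).2])
  have hGθ : 0 ≤ sin θ * (1 - deriv h θ) := by
    have hθπ : θ ∈ Ioo 0 π := ⟨hθ.1, by linarith [hθ.2]⟩
    rw [← (hG_eq θ hθπ).eq_of_nhds]
    simpa [G] using hG_mono ⟨le_rfl, by linarith⟩ (Ioc_subset_Icc_self hθ) hθ.1.le
  have := (mul_nonneg_iff_of_pos_left (sin_pos_of_pos_of_lt_pi hθ.1 (by linarith [hθ.2]))).1 hGθ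
  linarith

lemma deriv_eq_deriv_const_sub_of_add_eq {h : ℝ → ℝ} {c d θ : ℝ}
    (hsym : ∀ᶠ t in 𝓝 θ, h t + h (c - t) = d) (hd : DifferentiableAt ℝ h (c - θ)) :
    deriv h θ = deriv h (c - θ) := by
  have hder : HasDerivAt (fun t => d - h (c - t)) (deriv h (c - θ)) θ := by
    simpa using (hd.hasDerivAt.comp_const_sub c θ).const_sub d
  exact (hder.congr_of_eventuallyEq (hsym.mono fun t ht => by linarith)).deriv

lemma deriv_le_one_of_symm {h : ℝ → ℝ} (hdiff : ∀ θ ∈ Ioo 0 π, DifferentiableAt ℝ h θ)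
    (hsym : ∀ θ ∈ Icc 0 π, h θ + h (π - θ) = 2 * π)
    (hle : ∀ θ ∈ Ioc 0 (π / 2), deriv h θ ≤ 1) :
    ∀ θ ∈ Ioo 0 π, deriv h θ ≤ 1 := by
  intro θ hθ
  rcases le_or_gt θ (π / 2) with hθ' | hθ'
  · exact hle θ ⟨hθ.1, hθ'⟩
  have hsym_near : ∀ᶠ t in 𝓝 θ, h t + h (π - t) = 2 * π :=
    eventually_of_mem (isOpen_Ioo.mem_nhds hθ) fun t ht => hsym t (Ioo_subset_Icc_self ht)
  have hθπ : π - θ ∈ Ioo 0 π := ⟨by linarith [hθ.2], by linarith [hθ.1]⟩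
  rw [deriv_eq_deriv_const_sub_of_add_eq hsym_near (hdiff _ hθπ)]
  exact hle _ ⟨by linarith [hθ.2], by linarith⟩

lemma monotoneOn_const_add_sub_of_deriv_le_one {f : ℝ → ℝ} {a b c : ℝ}
    (hf : ContinuousOn f (Icc a b)) (hd : ∀ x ∈ Ioo a b, DifferentiableAt ℝ f x)
    (hle : ∀ x ∈ Ioo a b, deriv f x ≤ 1) :
    MonotoneOn (fun x => c + x - f x) (Icc a b) := by
  refine monotoneOn_of_hasDerivWithinAt_nonneg (f' := fun x => 1 - deriv f x) (convex_Icc a b)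
    ((continuousOn_const.add continuousOn_id).sub hf) (fun x hx => ?_) (fun x hx => ?_)
  all_goals rw [interior_Icc] at hx
  · exact (((hasDerivAt_id x).const_add c).sub (hd x hx).hasDerivAt).hasDerivWithinAt
  · exact sub_nonneg.2 (hle x hx)

lemma monotoneOn_sin_sq_mul_sin {u : ℝ → ℝ} (hu : ContinuousOn u (Icc 0 (π / 2)))
    (hd : ∀ θ ∈ Ioo 0 (π / 2), DifferentiableAt ℝ u θ)
    (hle : ∀ θ ∈ Ioo 0 (π / 2), deriv u θ ≤ 0)
    (hrange : ∀ θ ∈ Ioo 0 (π / 2), u θ ∈ Icc (π / 2) π) :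
    MonotoneOn (fun θ => sin (u θ) ^ 2 * sin θ) (Icc 0 (π / 2)) := by
  refine monotoneOn_of_hasDerivWithinAt_nonneg (convex_Icc _ _)
    (f' := fun θ => 2 * sin (u θ) * (cos (u θ) * deriv u θ) * sin θ + sin (u θ) ^ 2 * cos θ)
    (((continuous_sin.comp_continuousOn hu).pow 2).mul continuous_sin.continuousOn)
    (fun θ hθ => ?_) (fun θ hθ => ?_)
  all_goals rw [interior_Icc] at hθ
  · refine ((((hd θ hθ).hasDerivAt.sin.fun_pow 2).mul (hasDerivAt_sin θ)).congr_deriv ?_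
      ).hasDerivWithinAt
    norm_num
  have hπ := pi_pos
  have hsu : 0 ≤ sin (u θ) := sin_nonneg_of_nonneg_of_le_pi (by linarith [(hrange θ hθ).1])
    (hrange θ hθ).2
  have hcu : cos (u θ) ≤ 0 := cos_nonpos_of_pi_div_two_le_of_le (hrange θ hθ).1
    (by linarith [(hrange θ hθ).2])
  have hsθ : 0 ≤ sin θ := sin_nonneg_of_nonneg_of_le_pi hθ.1.le (by linarith [hθ.2])
  have hcθ : 0 ≤ cos θ := cos_nonneg_of_mem_Icc ⟨by linarith [hθ.1], hθ.2.le⟩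
  have hcu' : 0 ≤ cos (u θ) * deriv u θ := mul_nonneg_of_nonpos_of_nonpos hcu (hle θ hθ)
  positivity

lemma antitoneOn_of_monotoneOn_of_const_sub {f : ℝ → ℝ} {s t : Set ℝ} {c : ℝ}
    (hf : MonotoneOn f s) (hmaps : MapsTo (c - ·) t s) (hrefl : ∀ x ∈ t, f (c - x) = f x) :
    AntitoneOn f t := by
  intro a ha b hb hab
  rw [← hrefl a ha, ← hrefl b hb]
  exact hf (hmaps hb) (hmaps ha) (by linarith)

theorem monotonicity_first_type_general (κ : ℝ) (hκ : 4 ≤ κ) (h : ℝ → ℝ)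
    (hC1 : ContDiffOn ℝ 1 h (Set.Icc 0 π))
    (hC2 : ∀ θ ∈ Set.Ioo (0 : ℝ) π, DifferentiableAt ℝ (deriv h) θ)
    (heq : ∀ θ ∈ Set.Ioo (0 : ℝ) π,
      deriv (deriv h) θ + (Real.cos θ / Real.sin θ) * deriv h θ
        - Real.sin (2 * h θ) / (2 * Real.sin θ ^ 2)
        - (κ / 2) * Real.sin (2 * h θ - 2 * θ) = 0)
    (hsym : ∀ θ ∈ Set.Icc (0 : ℝ) π, h θ + h (π - θ) = 2 * π)
    (hwedge : ∀ θ ∈ Set.Icc (0 : ℝ) (π / 2), π ≤ h θ ∧ h θ ≤ π + θ) :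
    MonotoneOn (fun θ => π + θ - h θ) (Set.Icc 0 π) ∧
    MonotoneOn (fun θ => Real.sin (h θ - θ) ^ 2 * Real.sin θ) (Set.Icc 0 (π / 2)) ∧
    AntitoneOn (fun θ => Real.sin (h θ - θ) ^ 2 * Real.sin θ) (Set.Icc (π / 2) π) := by
  have hπ := pi_pos
  have hdiff : ∀ θ ∈ Ioo 0 π, DifferentiableAt ℝ h θ := fun θ hθ =>
    (hC1.differentiableOn one_ne_zero).differentiableAt (Icc_mem_nhds hθ.1 hθ.2)
  have hle : ∀ θ ∈ Ioo 0 π, deriv h θ ≤ 1 :=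
    deriv_le_one_of_symm hdiff hsym (deriv_le_one_of_wedge (by linarith) hC1 hC2 heq hwedge)
  have hIoo : ∀ θ ∈ Ioo 0 (π / 2), θ ∈ Ioo 0 π := fun θ hθ => ⟨hθ.1, by linarith [hθ.2]⟩
  have hmono : MonotoneOn (fun θ => sin (h θ - θ) ^ 2 * sin θ) (Icc 0 (π / 2)) :=
    monotoneOn_sin_sq_mul_sin (u := fun θ => h θ - θ)
      ((hC1.continuousOn.mono (Icc_subset_Icc_right (by linarith))).sub continuousOn_id)
      (fun θ hθ => (hdiff θ (hIoo θ hθ)).sub differentiableAt_id)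
      (fun θ hθ => by
        rw [((hdiff θ (hIoo θ hθ)).hasDerivAt.fun_sub (hasDerivAt_id' θ)).deriv]
        linarith [hle θ (hIoo θ hθ)])
      (fun θ hθ => by
        have hw := hwedge θ (Ioo_subset_Icc_self hθ)
        exact ⟨by linarith [hθ.2], by linarith [hθ.1]⟩)
  refine ⟨monotoneOn_const_add_sub_of_deriv_le_one hC1.continuousOn hdiff hle, hmono,
    antitoneOn_of_monotoneOn_of_const_sub (c := π) hmono
      (fun θ hθ => ⟨by linarith [hθ.2], by linarith [hθ.1]⟩) fun θ hθ => ?_⟩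
  have hs := hsym θ ⟨by linarith [hθ.1], hθ.2⟩
  rw [sin_pi_sub, ← sin_pi_sub (h θ - θ), show π - (h θ - θ) = h (π - θ) - (π - θ) by linarith]

/-- For a hemispheric critical profile of type (1,1) satisfying the first wedge
    condition (κ ≥ 4): θ ↦ π + θ − h(θ) is increasing on [0,π], and
    θ ↦ sin²(h(θ) − θ)·sin θ is increasing on [0,π/2] and decreasing on [π/2,π]. -/
theorem monotonicity_first_type (κ : ℝ) (hκ : 4 ≤ κ) (h : ℝ → ℝ)
    (hC1 : ContDiffOn ℝ 1 h (Set.Icc 0 π))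
    (hC2 : ∀ θ ∈ Set.Ioo (0 : ℝ) π, DifferentiableAt ℝ (deriv h) θ)
    (heq : ∀ θ ∈ Set.Ioo (0 : ℝ) π,
      deriv (deriv h) θ + (Real.cos θ / Real.sin θ) * deriv h θ
        - Real.sin (2 * h θ) / (2 * Real.sin θ ^ 2)
        - (κ / 2) * Real.sin (2 * h θ - 2 * θ) = 0)
    (h0 : h 0 = π) (hπ : h π = π)
    (hsym : ∀ θ ∈ Set.Icc (0 : ℝ) π, h θ + h (π - θ) = 2 * π)
    (hwedge : ∀ θ ∈ Set.Icc (0 : ℝ) (π / 2), π ≤ h θ ∧ h θ ≤ π + θ) :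
    MonotoneOn (fun θ => π + θ - h θ) (Set.Icc 0 π) ∧
    MonotoneOn (fun θ => Real.sin (h θ - θ) ^ 2 * Real.sin θ) (Set.Icc 0 (π / 2)) ∧
    AntitoneOn (fun θ => Real.sin (h θ - θ) ^ 2 * Real.sin θ) (Set.Icc (π / 2) π) :=
  monotonicity_first_type_general κ hκ h hC1 hC2 heq hsym hwedge
end

section
/- Let C > 0 and for each κ ≥ 4 let h_κ : [0, π] → ℝ be continuously differentiable on [0, π] and twice differentiable on (0, π), solving the profile equation h''(θ) + (cos θ / sin θ)·h'(θ) − sin(2h(θ))/(2 sin²θ) − (κ/2)·sin(2h(θ) − 2θ) = 0 on (0, π), with h_κ(0) = h_κ(π) = π, h_κ(θ) + h_κ(π − θ) = 2π for all θ ∈ [0, π], π ≤ h_κ(θ) ≤ π + θ for all θ ∈ [0, π/2], and E(h_κ) ≤ C·√κ. Then for every θ* ∈ (0, π/2), the supremum over θ ∈ [0, θ*] of |π + θ − h_κ(θ)| tends to 0 as κ → ∞. -/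
/-!
Write `g(θ) = π + θ - h(θ)` for the gap to the upper wedge boundary. Fix `θs < θb < π / 2` and
`0 < e < θs`. If `g > e` on all of `[θs, θb]`, the term `κ sin²(h - θ) sin θ` alone gives energy of
order `κ`, which exceeds `2 C √κ` for large `κ`; hence `g(θ₁) ≤ e` for some `θ₁ ∈ [θs, θb]`.
On the other hand, inside the wedge the profile equation makes `sin θ · g'(θ) = sin θ (1 - h'(θ))`
nondecreasing on `[e, θb]` once `κ sin² e cos θb ≥ 1`, so `g` has no strict interior maximum there
and `g ≤ max (g e) (g θ₁) ≤ e` on `[e, θ₁]`. On `[0, e]` the wedge alone gives `g ≤ θ ≤ e`.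
-/

open Real Set Filter MeasureTheory

theorem sin_sq_le_sin_sq_of_le_of_le {x y : ℝ} (hx : x ≤ π / 2) (hy : π ≤ y) (hyx : y ≤ π + x) :
    sin y ^ 2 ≤ sin x ^ 2 := by
  rw [← neg_neg (sin y), ← sin_sub_pi, neg_sq]
  exact pow_le_pow_left₀ (sin_nonneg_of_nonneg_of_le_pi (by linarith) (by linarith))
    (sin_le_sin_of_le_of_le_pi_div_two (by linarith) hx (by linarith)) 2

theorem sin_sq_le_sin_sq_of_wedge_of_symm {f : ℝ → ℝ}
    (hsym : ∀ θ ∈ Icc 0 π, f θ + f (π - θ) = 2 * π)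
    (hwedge : ∀ θ ∈ Icc 0 (π / 2), π ≤ f θ ∧ f θ ≤ π + θ) {x : ℝ} (hx : x ∈ Icc 0 π) :
    sin (f x) ^ 2 ≤ sin x ^ 2 := by
  rcases le_total x (π / 2) with hx2 | hx2
  · obtain ⟨h1, h2⟩ := hwedge x ⟨hx.1, hx2⟩
    exact sin_sq_le_sin_sq_of_le_of_le hx2 h1 h2
  · obtain ⟨h1, h2⟩ := hwedge (π - x) ⟨by linarith [hx.2], by linarith⟩
    have hfx : f x = 2 * π - f (π - x) := by linarith [hsym x hx]
    have := sin_sq_le_sin_sq_of_le_of_le (by linarith) h1 h2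
    rwa [hfx, sin_two_pi_sub, neg_sq, ← sin_pi_sub x]

theorem cos_sub_sin_two_mul_div_sub (κ x g : ℝ) (hx : sin x ≠ 0) :
    cos x - sin (2 * (π + x - g)) / (2 * sin x) - κ / 2 * sin x * sin (2 * (π + x - g) - 2 * x)
      = sin g * (cos (2 * x - g) + κ * sin x ^ 2 * cos g) / sin x := by
  rw [show 2 * (π + x - g) = 2 * x - 2 * g + 2 * π by ring,
    show 2 * x - 2 * g + 2 * π - 2 * x = -(2 * g) + 2 * π by ring,
    sin_add_two_pi, sin_add_two_pi, sin_neg]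
  field_simp
  simp only [sin_sub, cos_sub, sin_two_mul, cos_two_mul]
  linear_combination (-2 * cos x * sin x) * sin_sq_add_cos_sq g
    - 2 * cos g * sin g * sin_sq_add_cos_sq x

noncomputable def profileOperator (κ : ℝ) (f : ℝ → ℝ) (θ : ℝ) : ℝ :=
  deriv (deriv f) θ + (cos θ / sin θ) * deriv f θ - sin (2 * f θ) / (2 * sin θ ^ 2)
    - (κ / 2) * sin (2 * f θ - 2 * θ)

theorem monotoneOn_sin_mul_one_sub_deriv {κ δ b : ℝ} {f : ℝ → ℝ} (hδ : 0 < δ) (hb : b < π / 2)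
    (hf' : ∀ x ∈ Ioo δ b, DifferentiableAt ℝ (deriv f) x)
    (hode : ∀ x ∈ Ioo δ b, profileOperator κ f x = 0)
    (hwedge : ∀ x ∈ Ioo δ b, π ≤ f x ∧ f x ≤ π + x)
    (hκ : 1 ≤ κ * (sin δ ^ 2 * cos b)) :
    MonotoneOn (fun x => sin x * (1 - deriv f x)) (Ioo δ b) := by
  have hD : ∀ x ∈ Ioo δ b, HasDerivAt (fun x => sin x * (1 - deriv f x))
      (cos x * (1 - deriv f x) - sin x * deriv (deriv f) x) x := fun x hx =>
    ((hasDerivAt_sin x).mul ((hf' x hx).hasDerivAt.const_sub 1)).congr_deriv (by ring)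
  refine monotoneOn_of_hasDerivWithinAt_nonneg (convex_Ioo δ b)
    (fun x hx => (hD x hx).continuousAt.continuousWithinAt)
    (by simpa only [interior_Ioo] using fun x hx => (hD x hx).hasDerivWithinAt) ?_
  rw [interior_Ioo]
  rintro x ⟨hδx, hxb⟩
  obtain ⟨hfx, hfx'⟩ := hwedge x ⟨hδx, hxb⟩
  have hsinδ : 0 < sin δ := sin_pos_of_pos_of_lt_pi hδ (by linarith [pi_pos])
  have hsx : 0 < sin x := sin_pos_of_pos_of_lt_pi (by linarith) (by linarith [pi_pos])
  have hsinx : sin δ ≤ sin x := sin_le_sin_of_le_of_le_pi_div_two (by linarith) (by linarith) hδx.le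
  have hcos : cos b ≤ cos (π + x - f x) :=
    cos_le_cos_of_nonneg_of_le_pi (by linarith) (by linarith [pi_pos]) (by linarith)
  have hcosb : 0 < cos b := cos_pos_of_mem_Ioo ⟨by linarith [pi_pos], hb⟩
  have hκ0 : 0 ≤ κ :=
    (pos_of_mul_pos_left (one_pos.trans_le hκ) (mul_pos (pow_pos hsinδ 2) hcosb).le).le
  have hderiv : cos x * (1 - deriv f x) - sin x * deriv (deriv f) x
      = sin (π + x - f x) * (cos (2 * x - (π + x - f x)) + κ * sin x ^ 2 * cos (π + x - f x))
        / sin x := by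
    rw [← cos_sub_sin_two_mul_div_sub κ x _ hsx.ne', sub_sub_cancel]
    have := hode x ⟨hδx, hxb⟩
    unfold profileOperator at this
    field_simp at this ⊢
    linear_combination (-1) * this
  rw [hderiv]
  refine div_nonneg (mul_nonneg (sin_nonneg_of_nonneg_of_le_pi (by linarith) (by linarith)) ?_)
    hsx.le
  nlinarith [neg_one_le_cos (2 * x - (π + x - f x)),
    mul_le_mul (pow_le_pow_left₀ hsinδ.le hsinx 2) hcos hcosb.le (sq_nonneg _)]

theorem le_max_of_monotoneOn_mul_deriv {G G' s : ℝ → ℝ} {a b θ : ℝ}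
    (hG : ContinuousOn G (Icc a b)) (hG' : ∀ x ∈ Ioo a b, HasDerivAt G (G' x) x)
    (hs : ∀ x ∈ Ioo a b, 0 < s x) (hmono : MonotoneOn (fun x => s x * G' x) (Ioo a b))
    (hθ : θ ∈ Icc a b) : G θ ≤ max (G a) (G b) := by
  by_contra! hlt
  obtain ⟨hGa, hGb⟩ := max_lt_iff.1 hlt
  have haθ : a < θ := hθ.1.lt_of_ne (by rintro rfl; exact hGa.false)
  have hθb : θ < b := hθ.2.lt_of_ne (by rintro rfl; exact hGb.false)
  -- A strict interior maximum forces `G'` to change sign from `+` to `-`.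
  obtain ⟨u, hu, hGu⟩ := exists_hasDerivAt_eq_slope G G' haθ
    (hG.mono (Icc_subset_Icc_right hθb.le)) fun x hx => hG' x ⟨hx.1, hx.2.trans hθb⟩
  obtain ⟨v, hv, hGv⟩ := exists_hasDerivAt_eq_slope G G' hθb
    (hG.mono (Icc_subset_Icc_left haθ.le)) fun x hx => hG' x ⟨haθ.trans hx.1, hx.2⟩
  have huI : u ∈ Ioo a b := ⟨hu.1, hu.2.trans hθb⟩
  have hvI : v ∈ Ioo a b := ⟨haθ.trans hv.1, hv.2⟩
  have hu_pos : 0 < G' u := by rw [hGu]; exact div_pos (by linarith) (by linarith [hu.2])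
  have hv_neg : G' v < 0 := by
    rw [hGv]; exact div_neg_of_neg_of_pos (by linarith) (by linarith [hv.1])
  have := hmono huI hvI (hu.2.trans hv.1).le
  nlinarith [mul_pos (hs u huI) hu_pos, mul_pos (hs v hvI) (neg_pos.2 hv_neg)]

theorem sub_le_of_profile_of_sub_le_right {κ e b : ℝ} {f : ℝ → ℝ} (he : 0 < e) (hb : b < π / 2)
    (hf : ∀ x ∈ Icc e b, DifferentiableAt ℝ f x)
    (hf' : ∀ x ∈ Ioo e b, DifferentiableAt ℝ (deriv f) x)
    (hode : ∀ x ∈ Ioo e b, profileOperator κ f x = 0)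
    (hwedge : ∀ x ∈ Icc 0 b, π ≤ f x ∧ f x ≤ π + x)
    (hκ : 1 ≤ κ * (sin e ^ 2 * cos b)) (hfb : π + b - f b ≤ e) {θ : ℝ} (hθ : θ ∈ Icc 0 b) :
    π + θ - f θ ≤ e := by
  rcases le_total θ e with hθe | heθ
  · linarith [(hwedge θ hθ).1]
  have hfe : π + e - f e ≤ e := by linarith [(hwedge e ⟨he.le, heθ.trans hθ.2⟩).1]
  have hG : ContinuousOn (fun t => π + t - f t) (Icc e b) :=
    (continuousOn_const.add continuousOn_id).sub fun x hx =>
      (hf x hx).continuousAt.continuousWithinAt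
  have hG' : ∀ x ∈ Ioo e b, HasDerivAt (fun t => π + t - f t) (1 - deriv f x) x := fun x hx =>
    ((hasDerivAt_id x).const_add π).sub (hf x (Ioo_subset_Icc_self hx)).hasDerivAt
  have hsin : ∀ x ∈ Ioo e b, 0 < sin x := fun x hx =>
    sin_pos_of_pos_of_lt_pi (he.trans hx.1) (by linarith [hx.2, pi_pos])
  have hmono := monotoneOn_sin_mul_one_sub_deriv he hb hf' hode
    (fun x hx => hwedge x ⟨he.le.trans hx.1.le, hx.2.le⟩) hκ
  exact (le_max_of_monotoneOn_mul_deriv hG hG' hsin hmono ⟨heθ, hθ.2⟩).trans (max_le hfe hfb)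

noncomputable def energyDensity (κ : ℝ) (f : ℝ → ℝ) (θ : ℝ) : ℝ :=
  deriv f θ ^ 2 * sin θ + sin (f θ) ^ 2 / sin θ + κ * sin (f θ - θ) ^ 2 * sin θ

theorem energyDensity_nonneg {κ θ : ℝ} (f : ℝ → ℝ) (hκ : 0 ≤ κ) (hθ : θ ∈ Icc 0 π) :
    0 ≤ energyDensity κ f θ := by
  have := sin_nonneg_of_nonneg_of_le_pi hθ.1 hθ.2
  unfold energyDensity
  positivity

theorem exists_abs_deriv_le_of_contDiffOn_Icc {f : ℝ → ℝ} {a b : ℝ} (hab : a < b)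
    (hf : ContDiffOn ℝ 1 f (Icc a b)) : ∃ M, ∀ x ∈ Ioo a b, |deriv f x| ≤ M := by
  obtain ⟨M, hM⟩ := isCompact_Icc.exists_bound_of_continuousOn
    (hf.continuousOn_derivWithin (uniqueDiffOn_Icc hab) le_rfl)
  refine ⟨M, fun x hx => ?_⟩
  rw [← derivWithin_of_mem_nhds (Icc_mem_nhds hx.1 hx.2)]
  exact hM x (Ioo_subset_Icc_self hx)

theorem intervalIntegrable_energyDensity {κ : ℝ} {f : ℝ → ℝ} (hκ : 0 ≤ κ)
    (hf : ContDiffOn ℝ 1 f (Icc 0 π)) (hsin : ∀ x ∈ Ioo 0 π, sin (f x) ^ 2 ≤ sin x ^ 2) :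
    IntervalIntegrable (energyDensity κ f) volume 0 π := by
  obtain ⟨M, hM⟩ := exists_abs_deriv_le_of_contDiffOn_Icc pi_pos hf
  have hfo : ContDiffOn ℝ 1 f (Ioo 0 π) := hf.mono Ioo_subset_Icc_self
  have hcont : ContinuousOn (energyDensity κ f) (Ioo 0 π) := by
    have hs : ∀ x ∈ Ioo 0 π, sin x ≠ 0 := fun x hx => (sin_pos_of_pos_of_lt_pi hx.1 hx.2).ne'
    have h1 := hfo.continuousOn
    have h2 := hfo.continuousOn_deriv_of_isOpen isOpen_Ioo le_rfl
    unfold energyDensity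
    fun_prop (disch := assumption)
  have hbound : ∀ x ∈ Ioo 0 π, ‖energyDensity κ f x‖ ≤ M ^ 2 + 1 + κ := by
    intro x hx
    rw [norm_of_nonneg (energyDensity_nonneg f hκ (Ioo_subset_Icc_self hx))]
    have hs := sin_pos_of_pos_of_lt_pi hx.1 hx.2
    have hs1 := sin_le_one x
    have h1 : deriv f x ^ 2 * sin x ≤ M ^ 2 := by
      nlinarith [sq_abs (deriv f x), abs_nonneg (deriv f x), hM x hx]
    have h2 : sin (f x) ^ 2 / sin x ≤ 1 := by
      rw [div_le_one hs]
      nlinarith [hsin x hx]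
    have h3 : κ * sin (f x - x) ^ 2 * sin x ≤ κ := by
      nlinarith [sin_sq_le_one (f x - x), mul_nonneg hκ (sq_nonneg (sin (f x - x)))]
    unfold energyDensity
    linarith
  rw [intervalIntegrable_iff_integrableOn_Ioo_of_le pi_pos.le]
  exact ⟨hcont.aestronglyMeasurable measurableSet_Ioo,
    .restrict_of_bounded (C := M ^ 2 + 1 + κ) measure_Ioo_lt_top
      (ae_restrict_of_forall_mem measurableSet_Ioo hbound)⟩

theorem exists_sub_le_of_integral_energyDensity_lt {κ e a b : ℝ} {f : ℝ → ℝ} (hκ : 0 ≤ κ)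
    (he : 0 ≤ e) (ha : 0 ≤ a) (hab : a ≤ b) (hb : b ≤ π / 2) (hwedge : ∀ θ ∈ Icc a b, π ≤ f θ)
    (hint : IntervalIntegrable (energyDensity κ f) volume 0 π)
    (hlt : ∫ θ in 0..π, energyDensity κ f θ < κ * sin e ^ 2 * sin a * (b - a)) :
    ∃ θ ∈ Icc a b, π + θ - f θ ≤ e := by
  by_contra! hgap
  have hlow : ∀ θ ∈ Icc a b, κ * sin e ^ 2 * sin a ≤ energyDensity κ f θ := by
    intro θ hθ
    have hfθ := hwedge θ hθ
    have hs : 0 ≤ sin θ := sin_nonneg_of_nonneg_of_le_pi (ha.trans hθ.1) (by linarith [hθ.2])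
    have h1 : sin e ≤ sin (f θ - θ) := by
      rw [← sin_pi_sub (f θ - θ), show π - (f θ - θ) = π + θ - f θ by ring]
      exact sin_le_sin_of_le_of_le_pi_div_two (by linarith [pi_pos]) (by linarith [hθ.2])
        (hgap θ hθ).le
    have h2 : sin a ≤ sin θ := sin_le_sin_of_le_of_le_pi_div_two (by linarith [pi_pos])
      (by linarith [hθ.2]) hθ.1
    have h3 : κ * sin e ^ 2 * sin a ≤ κ * sin (f θ - θ) ^ 2 * sin θ :=
      mul_le_mul (mul_le_mul_of_nonneg_left (pow_le_pow_left₀ (sin_nonneg_of_nonneg_of_le_pi he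
        (by linarith [hgap θ hθ, hθ.2, pi_pos])) h1 2) hκ) h2
        (sin_nonneg_of_nonneg_of_le_pi ha (by linarith [pi_pos])) (by positivity)
    unfold energyDensity
    have := div_nonneg (sq_nonneg (sin (f θ))) hs
    nlinarith [mul_nonneg (sq_nonneg (deriv f θ)) hs]
  have hmass : κ * sin e ^ 2 * sin a * (b - a) ≤ ∫ θ in 0..π, energyDensity κ f θ :=
    calc κ * sin e ^ 2 * sin a * (b - a)
        = ∫ _ in a..b, κ * sin e ^ 2 * sin a := by
          simp only [intervalIntegral.integral_const, smul_eq_mul]; ring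
      _ ≤ ∫ θ in a..b, energyDensity κ f θ := by
          refine intervalIntegral.integral_mono_on hab intervalIntegrable_const
            (hint.mono_set ?_) hlow
          rw [uIcc_of_le hab, uIcc_of_le pi_pos.le]
          exact Icc_subset_Icc ha (by linarith [pi_pos])
      _ ≤ ∫ θ in 0..π, energyDensity κ f θ := intervalIntegral.integral_mono_interval ha hab
          (by linarith [pi_pos]) (ae_restrict_of_forall_mem measurableSet_Ioc
            fun x hx => energyDensity_nonneg f hκ (Ioc_subset_Icc_self hx)) hint
  linarith

theorem abs_sub_le_of_profile_of_energy_le {κ C e θs θb : ℝ} {f : ℝ → ℝ} (he : 0 < e)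
    (heθs : e < θs) (hθsb : θs < θb) (hθb : θb < π / 2) (hf : ContDiffOn ℝ 1 f (Icc 0 π))
    (hf' : ∀ x ∈ Ioo 0 π, DifferentiableAt ℝ (deriv f) x)
    (hode : ∀ x ∈ Ioo 0 π, profileOperator κ f x = 0)
    (hsym : ∀ θ ∈ Icc 0 π, f θ + f (π - θ) = 2 * π)
    (hwedge : ∀ θ ∈ Icc 0 (π / 2), π ≤ f θ ∧ f θ ≤ π + θ)
    (hE : 1 / 2 * ∫ θ in 0..π, energyDensity κ f θ ≤ C * √κ)
    (hκ : 1 ≤ κ * (sin e ^ 2 * cos θb))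
    (hκE : 2 * C < √κ * (sin e ^ 2 * sin θs * (θb - θs))) {θ : ℝ} (hθ : θ ∈ Icc 0 θs) :
    |π + θ - f θ| ≤ e := by
  have hκ0 : 0 < κ := pos_of_mul_pos_left (one_pos.trans_le hκ) (mul_pos
    (pow_pos (sin_pos_of_pos_of_lt_pi he (by linarith)) 2)
    (cos_pos_of_mem_Ioo ⟨by linarith, hθb⟩)).le
  have hint := intervalIntegrable_energyDensity hκ0.le hf fun x hx =>
    sin_sq_le_sin_sq_of_wedge_of_symm hsym hwedge (Ioo_subset_Icc_self hx)
  have hlt : ∫ θ in 0..π, energyDensity κ f θ < κ * sin e ^ 2 * sin θs * (θb - θs) := by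
    have hprod := mul_lt_mul_of_pos_right hκE (sqrt_pos.2 hκ0)
    have hκ_sq : √κ * (sin e ^ 2 * sin θs * (θb - θs)) * √κ
        = κ * sin e ^ 2 * sin θs * (θb - θs) := by
      rw [mul_right_comm, mul_self_sqrt hκ0.le]; ring
    linarith
  obtain ⟨θ₁, hθ₁, hgap⟩ := exists_sub_le_of_integral_energyDensity_lt hκ0.le he.le
    (by linarith) hθsb.le hθb.le (fun x hx => (hwedge x ⟨by linarith [hx.1], by linarith [hx.2]⟩).1)
    hint hlt
  have hκ₁ : 1 ≤ κ * (sin e ^ 2 * cos θ₁) := by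
    refine hκ.trans (mul_le_mul_of_nonneg_left (mul_le_mul_of_nonneg_left ?_ (sq_nonneg _)) hκ0.le)
    exact cos_le_cos_of_nonneg_of_le_pi (by linarith [hθ₁.1]) (by linarith) hθ₁.2
  have hsub : Icc e θ₁ ⊆ Ioo 0 π := Icc_subset_Ioo he (by linarith [hθ₁.2])
  have hw := hwedge θ ⟨hθ.1, by linarith [hθ.2]⟩
  rw [abs_of_nonneg (by linarith)]
  exact sub_le_of_profile_of_sub_le_right he (hθ₁.2.trans_lt hθb)
    (fun x hx => ((hf.differentiableOn one_ne_zero).mono Ioo_subset_Icc_self).differentiableAt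
      (isOpen_Ioo.mem_nhds (hsub hx)))
    (fun x hx => hf' x (hsub (Ioo_subset_Icc_self hx)))
    (fun x hx => hode x (hsub (Ioo_subset_Icc_self hx)))
    (fun x hx => hwedge x ⟨hx.1, hx.2.trans (by linarith [hθ₁.2])⟩) hκ₁ hgap
    ⟨hθ.1, hθ.2.trans hθ₁.1⟩

theorem tendsto_sSup_image_abs_nhds_zero {ι α : Type*} {l : Filter ι} {F : ι → α → ℝ} {s : Set α}
    {r : ℝ} (hr : 0 < r) (hF : ∀ e ∈ Ioo 0 r, ∀ᶠ i in l, ∀ x ∈ s, |F i x| ≤ e) :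
    Tendsto (fun i => sSup ((fun x => |F i x|) '' s)) l (nhds 0) := by
  refine tendsto_order.2 ⟨fun a ha => Eventually.of_forall fun i =>
    ha.trans_le (Real.sSup_nonneg (by rintro _ ⟨x, -, rfl⟩; exact abs_nonneg _)), fun a ha => ?_⟩
  have he : min (a / 2) (r / 2) ∈ Ioo 0 r :=
    ⟨by positivity, by linarith [min_le_right (a / 2) (r / 2)]⟩
  filter_upwards [hF _ he] with i hi
  refine (Real.sSup_le (by rintro _ ⟨x, hx, rfl⟩; exact hi x hx) he.1.le).trans_lt ?_
  linarith [min_le_left (a / 2) (r / 2)]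

theorem pointwise_convergence_profiles_general
    (C : ℝ) (h : ℝ → ℝ → ℝ)
    (hC1 : ∀ κ : ℝ, 4 ≤ κ → ContDiffOn ℝ 1 (h κ) (Set.Icc 0 π))
    (hC2 : ∀ κ : ℝ, 4 ≤ κ → ∀ θ ∈ Set.Ioo (0 : ℝ) π, DifferentiableAt ℝ (deriv (h κ)) θ)
    (heq : ∀ κ : ℝ, 4 ≤ κ → ∀ θ ∈ Set.Ioo (0 : ℝ) π,
      deriv (deriv (h κ)) θ + (Real.cos θ / Real.sin θ) * deriv (h κ) θ
        - Real.sin (2 * h κ θ) / (2 * Real.sin θ ^ 2)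
        - (κ / 2) * Real.sin (2 * h κ θ - 2 * θ) = 0)
    (hsym : ∀ κ : ℝ, 4 ≤ κ → ∀ θ ∈ Set.Icc (0 : ℝ) π, h κ θ + h κ (π - θ) = 2 * π)
    (hwedge : ∀ κ : ℝ, 4 ≤ κ → ∀ θ ∈ Set.Icc (0 : ℝ) (π / 2), π ≤ h κ θ ∧ h κ θ ≤ π + θ)
    (hE : ∀ κ : ℝ, 4 ≤ κ →
      (1 / 2) * (∫ θ in (0 : ℝ)..π,
          (deriv (h κ) θ) ^ 2 * Real.sin θ
          + Real.sin (h κ θ) ^ 2 / Real.sin θ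
          + κ * Real.sin (h κ θ - θ) ^ 2 * Real.sin θ)
        ≤ C * Real.sqrt κ) :
    ∀ θs ∈ Set.Ioo (0 : ℝ) (π / 2),
      Tendsto (fun κ : ℝ => sSup ((fun θ => |π + θ - h κ θ|) '' Set.Icc 0 θs))
        atTop (nhds 0) := by
  rintro θs ⟨hθs0, hθs⟩
  refine tendsto_sSup_image_abs_nhds_zero (F := fun κ θ => π + θ - h κ θ) hθs0 ?_
  rintro e ⟨he, heθs⟩
  obtain ⟨θb, hθsb, hθb⟩ : ∃ θb, θs < θb ∧ θb < π / 2 :=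
    ⟨(θs + π / 2) / 2, by linarith, by linarith⟩
  have hsin_e : 0 < sin e := sin_pos_of_pos_of_lt_pi he (by linarith)
  have hc : 0 < sin e ^ 2 * sin θs * (θb - θs) := mul_pos (mul_pos (pow_pos hsin_e 2)
    (sin_pos_of_pos_of_lt_pi hθs0 (by linarith))) (by linarith)
  have hcos : 0 < sin e ^ 2 * cos θb :=
    mul_pos (pow_pos hsin_e 2) (cos_pos_of_mem_Ioo ⟨by linarith, hθb⟩)
  filter_upwards [eventually_ge_atTop 4, (tendsto_id.atTop_mul_const hcos).eventually_ge_atTop 1,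
    (tendsto_sqrt_atTop.atTop_mul_const hc).eventually_gt_atTop (2 * C)] with κ hκ4 hκ hκE θ hθ
  exact abs_sub_le_of_profile_of_energy_le he heθs hθsb hθb (hC1 κ hκ4) (hC2 κ hκ4) (heq κ hκ4)
    (hsym κ hκ4) (hwedge κ hκ4) (hE κ hκ4) hκ hκE hθ

/-- Uniform convergence of a family of hemispheric type-(1,1) critical profiles
    with E(h_κ) ≤ C√κ:  for every θ* ∈ (0, π/2),
    sup_{θ ∈ [0,θ*]} |π + θ − h_κ(θ)| → 0 as κ → ∞. -/
theorem pointwise_convergence_profiles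
    (C : ℝ) (hC : 0 < C) (h : ℝ → ℝ → ℝ)
    (hC1 : ∀ κ : ℝ, 4 ≤ κ → ContDiffOn ℝ 1 (h κ) (Set.Icc 0 π))
    (hC2 : ∀ κ : ℝ, 4 ≤ κ → ∀ θ ∈ Set.Ioo (0 : ℝ) π, DifferentiableAt ℝ (deriv (h κ)) θ)
    (heq : ∀ κ : ℝ, 4 ≤ κ → ∀ θ ∈ Set.Ioo (0 : ℝ) π,
      deriv (deriv (h κ)) θ + (Real.cos θ / Real.sin θ) * deriv (h κ) θ
        - Real.sin (2 * h κ θ) / (2 * Real.sin θ ^ 2)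
        - (κ / 2) * Real.sin (2 * h κ θ - 2 * θ) = 0)
    (hbd : ∀ κ : ℝ, 4 ≤ κ → h κ 0 = π ∧ h κ π = π)
    (hsym : ∀ κ : ℝ, 4 ≤ κ → ∀ θ ∈ Set.Icc (0 : ℝ) π, h κ θ + h κ (π - θ) = 2 * π)
    (hwedge : ∀ κ : ℝ, 4 ≤ κ → ∀ θ ∈ Set.Icc (0 : ℝ) (π / 2), π ≤ h κ θ ∧ h κ θ ≤ π + θ)
    (hE : ∀ κ : ℝ, 4 ≤ κ →
      (1 / 2) * (∫ θ in (0 : ℝ)..π,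
          (deriv (h κ) θ) ^ 2 * Real.sin θ
          + Real.sin (h κ θ) ^ 2 / Real.sin θ
          + κ * Real.sin (h κ θ - θ) ^ 2 * Real.sin θ)
        ≤ C * Real.sqrt κ) :
    ∀ θs ∈ Set.Ioo (0 : ℝ) (π / 2),
      Tendsto (fun κ : ℝ => sSup ((fun θ => |π + θ - h κ θ|) '' Set.Icc 0 θs))
        atTop (nhds 0) :=
  pointwise_convergence_profiles_general C h hC1 hC2 heq hsym hwedge hE
end
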